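/- Let n ≥ 2, let κ : [-1,1] → [0,∞) be measurable with ∫_{S^{n-1}} κ(v·v') dv = 1 for each v' ∈ S^{n-1}, and fix unit vectors v', e ∈ S^{n-1}. Define h(τ) = ∫_{S^{n-1}} κ(v·v') sin²(τ (v·e)/2) dv for τ > 0. Then lim_{δ→0⁺} (2/ln(1/δ)) ∫_δ^1 h(τ) τ^{−3} dτ = (1/2) ∫_{S^{n-1}} κ(v·v') (v·e)² dv. -/

import Mathlib

open MeasureTheory Metric Filter Set
open scoped ENNReal

noncomputable section

/-- Euclidean space `ℝⁿ`. -/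
abbrev Euc (n : ℕ) := EuclideanSpace ℝ (Fin n)

/-- The unit sphere `S^{n-1}` in `ℝⁿ`. -/
abbrev Sph (n : ℕ) := Metric.sphere (0 : Euc n) 1

/-- The normalized surface measure on the unit sphere (total mass `1`): the surface
measure divided by its total mass. -/
noncomputable def sphμ (n : ℕ) : Measure (Sph n) :=
  ((volume : Measure (Euc n)).toSphere Set.univ)⁻¹ • (volume : Measure (Euc n)).toSphere

/-- A path-length density: measurable, nonnegative, integrating to one on `(0,∞)`, with
finite first moment. -/
def IsPathDensity (p : ℝ → ℝ) : Prop :=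
  Measurable p ∧ (∀ s, 0 ≤ p s) ∧ (∫ s in Set.Ioi (0 : ℝ), p s = 1) ∧
    IntegrableOn (fun s => s * p s) (Set.Ioi (0 : ℝ))

/-- A normalized nonnegative angular kernel `κ` on `[-1,1]`:
`∫_{S^{n-1}} κ(v·v') dv = 1` for every `v'`. -/
def IsAngularKernel (n : ℕ) (κ : ℝ → ℝ) : Prop :=
  Measurable κ ∧ (∀ μ ∈ Set.Icc (-1 : ℝ) 1, 0 ≤ κ μ) ∧
    ∀ v' : Sph n, ∫ v, κ (inner ℝ (v : Euc n) (v' : Euc n)) ∂(sphμ n) = 1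

open Topology

/-!
Since `sin² (x / 2) = (1 - cos x) / 2`, the quartic Taylor bound for `cos` gives
`h τ = τ² / 4 · ∫ κ(v·v') (v·e)² dv + O(τ⁴)` uniformly for `τ ∈ (0, 1]`. Hence `h τ / τ³` differs
from `(1 / 4) ∫ κ(v·v') (v·e)² dv / τ` by a bounded function, and the integral over `(δ, 1]` is
that constant times `log (1 / δ)` plus `O(1)`.
-/

lemma abs_sin_half_sq_sub_le {x : ℝ} (hx : |x| ≤ 1) :
    |Real.sin (x / 2) ^ 2 - x ^ 2 / 4| ≤ 5 / 192 * |x| ^ 4 := by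
  have hcos := Real.cos_bound hx
  have hsin : Real.sin (x / 2) ^ 2 - x ^ 2 / 4 = -(Real.cos x - (1 - x ^ 2 / 2)) / 2 := by
    rw [Real.sin_sq_eq_half_sub, mul_div_cancel₀ x two_ne_zero]
    ring
  rw [hsin, abs_div, abs_neg, abs_two]
  linarith

lemma tendsto_setIntegral_Ioc_div_log {g : ℝ → ℝ} {c C : ℝ} (hg : ContinuousOn g (Ioc 0 1))
    (hbound : ∀ τ ∈ Ioc (0 : ℝ) 1, |g τ - c / τ| ≤ C) :
    Tendsto (fun δ => (∫ τ in Ioc δ 1, g τ) / Real.log (1 / δ)) (𝓝[>] 0) (𝓝 c) := by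
  have hlog : Tendsto (fun δ : ℝ => Real.log (1 / δ)) (𝓝[>] 0) atTop := by
    simp only [one_div, Real.log_inv]
    exact tendsto_neg_atBot_atTop.comp Real.tendsto_log_nhdsGT_zero
  have hsplit : ∀ δ ∈ Ioo (0 : ℝ) 1, (∫ τ in Ioc δ 1, g τ) / Real.log (1 / δ) =
      c + (∫ τ in Ioc δ 1, (g τ - c / τ)) / Real.log (1 / δ) := by
    intro δ ⟨hδ0, hδ1⟩
    have hsub : Icc δ 1 ⊆ Ioc 0 1 := Icc_subset_Ioc hδ0 le_rfl
    have hg_int : IntegrableOn g (Ioc δ 1) :=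
      ((hg.mono hsub).integrableOn_Icc).mono_set Ioc_subset_Icc_self
    have hinv_int : IntegrableOn (fun τ => c / τ) (Ioc δ 1) :=
      ((continuousOn_const.div continuousOn_id fun τ hτ => (hsub hτ).1.ne').integrableOn_Icc)
        |>.mono_set Ioc_subset_Icc_self
    have hinv : ∫ τ in Ioc δ 1, c / τ = c * Real.log (1 / δ) := by
      rw [← intervalIntegral.integral_of_le hδ1.le]
      simp [div_eq_mul_inv, integral_inv_of_pos hδ0 one_pos]
    have hL : Real.log (1 / δ) ≠ 0 := (Real.log_pos (one_lt_one_div hδ0 hδ1)).ne'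
    rw [integral_sub hg_int hinv_int, hinv]
    field_simp
    ring
  have hremainder : Tendsto (fun δ => (∫ τ in Ioc δ 1, (g τ - c / τ)) / Real.log (1 / δ))
      (𝓝[>] 0) (𝓝 0) := by
    have hC_div_log := (tendsto_inv_atTop_zero.comp hlog).const_mul C
    rw [mul_zero] at hC_div_log
    refine squeeze_zero_norm' ?_ hC_div_log
    filter_upwards [Ioo_mem_nhdsGT one_pos] with δ ⟨hδ0, hδ1⟩
    have hL : 0 < Real.log (1 / δ) := Real.log_pos (one_lt_one_div hδ0 hδ1)
    have hR : ‖∫ τ in Ioc δ 1, (g τ - c / τ)‖ ≤ C := by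
      calc ‖∫ τ in Ioc δ 1, (g τ - c / τ)‖ ≤ C * volume.real (Ioc δ 1) :=
            norm_setIntegral_le_of_norm_le_const measure_Ioc_lt_top fun τ hτ =>
              hbound τ ⟨hδ0.trans hτ.1, hτ.2⟩
        _ ≤ C * 1 := by
            have hC : 0 ≤ C := (abs_nonneg _).trans (hbound 1 ⟨one_pos, le_rfl⟩)
            gcongr
            rw [Real.volume_real_Ioc_of_le hδ1.le]
            linarith
        _ = C := mul_one C
    rw [norm_div, Real.norm_of_nonneg hL.le, div_eq_mul_inv, Function.comp_apply]
    exact mul_le_mul_of_nonneg_right hR (inv_nonneg.mpr hL.le)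
  have hlim := (tendsto_const_nhds (x := c)).add hremainder
  rw [add_zero] at hlim
  exact hlim.congr' (eventually_of_mem (Ioo_mem_nhdsGT one_pos) fun δ hδ => (hsplit δ hδ).symm)

section SinSqIntegral

variable {α : Type*} [MeasurableSpace α] {μ : Measure α} {f m : α → ℝ}

lemma integrable_mul_sin_sq (hf : Integrable f μ) (hm : AEStronglyMeasurable m μ) (τ : ℝ) :
    Integrable (fun v => f v * Real.sin (τ * m v / 2) ^ 2) μ :=
  hf.mul_bdd (c := 1)
    ((by fun_prop : Continuous fun x => Real.sin (τ * x / 2) ^ 2).comp_aestronglyMeasurable hm)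
    (ae_of_all _ fun v => by
      rw [Real.norm_of_nonneg (sq_nonneg _)]
      exact Real.sin_sq_le_one _)

lemma continuous_integral_mul_sin_sq (hf : Integrable f μ) (hm : AEStronglyMeasurable m μ) :
    Continuous fun τ => ∫ v, f v * Real.sin (τ * m v / 2) ^ 2 ∂μ := by
  refine continuous_of_dominated (fun τ => (integrable_mul_sin_sq hf hm τ).aestronglyMeasurable)
    (fun τ => ae_of_all _ fun v => ?_) hf.norm (ae_of_all _ fun v => by fun_prop)
  rw [norm_mul, Real.norm_of_nonneg (sq_nonneg _)]
  exact mul_le_of_le_one_right (norm_nonneg _) (Real.sin_sq_le_one _)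

lemma abs_integral_mul_sin_sq_sub_le (hf : Integrable f μ) (hm : AEStronglyMeasurable m μ)
    (hm1 : ∀ v, |m v| ≤ 1) {τ : ℝ} (hτ : |τ| ≤ 1) :
    |∫ v, f v * Real.sin (τ * m v / 2) ^ 2 ∂μ - τ ^ 2 / 4 * ∫ v, f v * m v ^ 2 ∂μ|
      ≤ 5 / 192 * τ ^ 4 * ∫ v, |f v| ∂μ := by
  have hτm : ∀ v, |τ * m v| ≤ 1 := fun v => by
    rw [abs_mul]
    exact mul_le_one₀ hτ (abs_nonneg _) (hm1 v)
  have hquad : Integrable (fun v => f v * (τ * m v) ^ 2 / 4) μ := by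
    refine (hf.mul_bdd (c := 1) ?_ (ae_of_all _ fun v => ?_)).div_const 4
    · exact (by fun_prop : Continuous fun x => (τ * x) ^ 2).comp_aestronglyMeasurable hm
    · rw [norm_pow, Real.norm_eq_abs]
      exact pow_le_one₀ (abs_nonneg _) (hτm v)
  have hpoint : ∀ v, ‖f v * Real.sin (τ * m v / 2) ^ 2 - f v * (τ * m v) ^ 2 / 4‖
      ≤ 5 / 192 * τ ^ 4 * |f v| := by
    intro v
    have hτm4 : |τ * m v| ^ 4 ≤ τ ^ 4 := by
      calc |τ * m v| ^ 4 = |τ| ^ 4 * |m v| ^ 4 := by rw [abs_mul, mul_pow]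
        _ ≤ |τ| ^ 4 * 1 := by gcongr; exact pow_le_one₀ (abs_nonneg _) (hm1 v)
        _ = τ ^ 4 := by rw [mul_one, pow_abs, abs_of_nonneg (by positivity)]
    rw [Real.norm_eq_abs, show f v * Real.sin (τ * m v / 2) ^ 2 - f v * (τ * m v) ^ 2 / 4
      = (Real.sin (τ * m v / 2) ^ 2 - (τ * m v) ^ 2 / 4) * f v by ring, abs_mul]
    calc |Real.sin (τ * m v / 2) ^ 2 - (τ * m v) ^ 2 / 4| * |f v|
        ≤ 5 / 192 * |τ * m v| ^ 4 * |f v| := by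
          gcongr
          exact abs_sin_half_sq_sub_le (hτm v)
      _ ≤ 5 / 192 * τ ^ 4 * |f v| := by gcongr
  calc |∫ v, f v * Real.sin (τ * m v / 2) ^ 2 ∂μ - τ ^ 2 / 4 * ∫ v, f v * m v ^ 2 ∂μ|
      = ‖∫ v, (f v * Real.sin (τ * m v / 2) ^ 2 - f v * (τ * m v) ^ 2 / 4) ∂μ‖ := by
        rw [integral_sub (integrable_mul_sin_sq hf hm τ) hquad, ← integral_const_mul,
          Real.norm_eq_abs]
        congr 3
        ext v
        ring
    _ ≤ ∫ v, 5 / 192 * τ ^ 4 * |f v| ∂μ :=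
        norm_integral_le_of_norm_le (hf.abs.const_mul _) (ae_of_all _ hpoint)
    _ = 5 / 192 * τ ^ 4 * ∫ v, |f v| ∂μ := integral_const_mul _ _

theorem tendsto_two_div_log_mul_integral_sin_sq (hf : Integrable f μ)
    (hm : AEStronglyMeasurable m μ) (hm1 : ∀ v, |m v| ≤ 1) :
    Tendsto (fun δ : ℝ => 2 / Real.log (1 / δ) *
        ∫ τ in Ioc δ 1, (∫ v, f v * Real.sin (τ * m v / 2) ^ 2 ∂μ) / τ ^ 3)
      (𝓝[>] 0) (𝓝 (1 / 2 * ∫ v, f v * m v ^ 2 ∂μ)) := by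
  set I := ∫ v, f v * m v ^ 2 ∂μ
  set K := 5 / 192 * ∫ v, |f v| ∂μ
  have hK : 0 ≤ K := by positivity
  have hcont : ContinuousOn (fun τ => (∫ v, f v * Real.sin (τ * m v / 2) ^ 2 ∂μ) / τ ^ 3)
      (Ioc 0 1) :=
    (continuous_integral_mul_sin_sq hf hm).continuousOn.div (continuousOn_pow 3)
      fun τ hτ => pow_ne_zero 3 hτ.1.ne'
  have hbound : ∀ τ ∈ Ioc (0 : ℝ) 1,
      |(∫ v, f v * Real.sin (τ * m v / 2) ^ 2 ∂μ) / τ ^ 3 - I / 4 / τ| ≤ K := by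
    intro τ ⟨hτ0, hτ1⟩
    have hτ := abs_integral_mul_sin_sq_sub_le hf hm hm1 (abs_le.mpr ⟨by linarith, hτ1⟩)
    rw [show ∀ x : ℝ, x / τ ^ 3 - I / 4 / τ = (x - τ ^ 2 / 4 * I) / τ ^ 3 by
        intro x; field_simp, abs_div, abs_of_pos (pow_pos hτ0 3), div_le_iff₀ (by positivity)]
    calc _ ≤ 5 / 192 * τ ^ 4 * ∫ v, |f v| ∂μ := hτ
      _ = K * τ ^ 3 * τ := by ring
      _ ≤ K * τ ^ 3 * 1 := by gcongr
      _ = K * τ ^ 3 := mul_one _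
  have hlim := (tendsto_setIntegral_Ioc_div_log hcont hbound).const_mul 2
  rw [show 2 * (I / 4) = 1 / 2 * I by ring] at hlim
  exact hlim.congr fun δ => by ring

end SinSqIntegral

theorem log_average_limit_general
    (n : ℕ)
    (κ : ℝ → ℝ) (hκ : IsAngularKernel n κ)
    (v' e : Sph n) :
    Tendsto
      (fun δ : ℝ => 2 / Real.log (1 / δ) *
        ∫ τ in Set.Ioc δ (1 : ℝ),
          (∫ v : Sph n, κ (inner ℝ (v : Euc n) (v' : Euc n)) *
            Real.sin (τ * inner ℝ (v : Euc n) (e : Euc n) / 2) ^ 2 ∂(sphμ n)) / τ ^ 3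
          ∂volume)
      (nhdsWithin 0 (Set.Ioi (0 : ℝ)))
      (nhds (1 / 2 *
        ∫ v : Sph n, κ (inner ℝ (v : Euc n) (v' : Euc n)) *
          (inner ℝ (v : Euc n) (e : Euc n) : ℝ) ^ 2 ∂(sphμ n))) := by
  have hinner : Continuous fun v : Sph n => inner ℝ (v : Euc n) (e : Euc n) := by fun_prop
  refine tendsto_two_div_log_mul_integral_sin_sq (integrable_of_integral_eq_one (hκ.2.2 v'))
    hinner.aestronglyMeasurable fun v => ?_
  simpa [norm_eq_of_mem_sphere] using abs_real_inner_le_norm (v : Euc n) (e : Euc n)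

/-- the L'Hôpital-type computation in case (c) of Proposition 4.5:
`(2/ln(1/δ)) ∫_δ^1 h(τ) τ⁻³ dτ → (1/2) ∫_{S^{n-1}} κ(v·v') (v·e)² dv` as `δ → 0⁺`,
where `h(τ) = ∫_{S^{n-1}} κ(v·v') sin²(τ(v·e)/2) dv`. -/
theorem log_average_limit
    (n : ℕ) (hn : 2 ≤ n)
    (κ : ℝ → ℝ) (hκ : IsAngularKernel n κ)
    (v' e : Sph n) :
    Tendsto
      (fun δ : ℝ => 2 / Real.log (1 / δ) *
        ∫ τ in Set.Ioc δ (1 : ℝ),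
          (∫ v : Sph n, κ (inner ℝ (v : Euc n) (v' : Euc n)) *
            Real.sin (τ * inner ℝ (v : Euc n) (e : Euc n) / 2) ^ 2 ∂(sphμ n)) / τ ^ 3
          ∂volume)
      (nhdsWithin 0 (Set.Ioi (0 : ℝ)))
      (nhds (1 / 2 *
        ∫ v : Sph n, κ (inner ℝ (v : Euc n) (v' : Euc n)) *
          (inner ℝ (v : Euc n) (e : Euc n) : ℝ) ^ 2 ∂(sphμ n))) :=
  log_average_limit_general n κ hκ v' e
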